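/- Concepts of L_Φ are invariant for L_Φ-bisimulation: if Z is an L_Φ-bisimulation between interpretations I and I' and Z(x,x') holds, then for every concept C of L_Φ, x ∈ C^I if and only if x' ∈ C^{I'}. -/

import Mathlib

/-- A set of DL-features (subset of {I, O, Q, U, Self}). -/
structure DLFeat where
  hasI : Bool
  hasO : Bool
  hasQ : Bool
  hasU : Bool
  hasSelf : Bool

/-- An interpretation with concept names `CN`, role names `RN`, individual names `IN`
and domain `D`. -/
structure Interp (CN RN IN : Type) (D : Type) where
  cInt : CN → Set D
  rInt : RN → D → D → Prop
  iInt : IN → D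

/-- Interpretation of a basic role: a role name, possibly inverted. -/
def brInt {CN RN IN D : Type} (I : Interp CN RN IN D) (R : RN × Bool) (x y : D) : Prop :=
  if R.2 then I.rInt R.1 y x else I.rInt R.1 x y

mutual
/-- Concepts of the full language (membership in `L_Φ` is a separate predicate). -/
inductive DLConcept (CN RN IN : Type) : Type where
  | atom (A : CN)
  | top
  | bot
  | neg (C : DLConcept CN RN IN)
  | conj (C D : DLConcept CN RN IN)
  | disj (C D : DLConcept CN RN IN)
  | all (R : DLRole CN RN IN) (C : DLConcept CN RN IN)
  | ex (R : DLRole CN RN IN) (C : DLConcept CN RN IN)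
  | nom (a : IN)
  | atLeast (n : ℕ) (r : RN) (inverted : Bool) (C : DLConcept CN RN IN)
  | atMost (n : ℕ) (r : RN) (inverted : Bool) (C : DLConcept CN RN IN)
  | exSelf (r : RN)
/-- Roles of the full language. -/
inductive DLRole (CN RN IN : Type) : Type where
  | name (r : RN)
  | eps
  | comp (R S : DLRole CN RN IN)
  | runion (R S : DLRole CN RN IN)
  | star (R : DLRole CN RN IN)
  | test (C : DLConcept CN RN IN)
  | inv (r : RN)
  | univ
end

mutual
/-- The concept belongs to the language `L_Φ`. -/
def DLConcept.inL {CN RN IN : Type} (Φ : DLFeat) : DLConcept CN RN IN → Prop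
  | .atom _ => True
  | .top => True
  | .bot => True
  | .neg C => C.inL Φ
  | .conj C D => C.inL Φ ∧ D.inL Φ
  | .disj C D => C.inL Φ ∧ D.inL Φ
  | .all R C => R.inL Φ ∧ C.inL Φ
  | .ex R C => R.inL Φ ∧ C.inL Φ
  | .nom _ => Φ.hasO = true
  | .atLeast _ _ b C => Φ.hasQ = true ∧ (b = true → Φ.hasI = true) ∧ C.inL Φ
  | .atMost _ _ b C => Φ.hasQ = true ∧ (b = true → Φ.hasI = true) ∧ C.inL Φ
  | .exSelf _ => Φ.hasSelf = true
/-- The role belongs to the language `L_Φ`. -/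
def DLRole.inL {CN RN IN : Type} (Φ : DLFeat) : DLRole CN RN IN → Prop
  | .name _ => True
  | .eps => True
  | .comp R S => R.inL Φ ∧ S.inL Φ
  | .runion R S => R.inL Φ ∧ S.inL Φ
  | .star R => R.inL Φ
  | .test C => C.inL Φ
  | .inv _ => Φ.hasI = true
  | .univ => Φ.hasU = true
end

mutual
/-- Semantics of concepts. -/
def DLConcept.sem {CN RN IN D : Type} (I : Interp CN RN IN D) : DLConcept CN RN IN → Set D
  | .atom A => I.cInt A
  | .top => Set.univ
  | .bot => ∅
  | .neg C => (DLConcept.sem I C)ᶜ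
  | .conj C C' => DLConcept.sem I C ∩ DLConcept.sem I C'
  | .disj C C' => DLConcept.sem I C ∪ DLConcept.sem I C'
  | .all R C => {x | ∀ y, DLRole.sem I R x y → y ∈ DLConcept.sem I C}
  | .ex R C => {x | ∃ y, DLRole.sem I R x y ∧ y ∈ DLConcept.sem I C}
  | .nom a => {I.iInt a}
  | .atLeast n r b C =>
      {x | (n : Cardinal) ≤ Cardinal.mk {y // brInt I (r, b) x y ∧ y ∈ DLConcept.sem I C}}
  | .atMost n r b C =>
      {x | Cardinal.mk {y // brInt I (r, b) x y ∧ y ∈ DLConcept.sem I C} ≤ (n : Cardinal)}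
  | .exSelf r => {x | I.rInt r x x}
/-- Semantics of roles. -/
def DLRole.sem {CN RN IN D : Type} (I : Interp CN RN IN D) : DLRole CN RN IN → D → D → Prop
  | .name r => I.rInt r
  | .eps => Eq
  | .comp R S => Relation.Comp (DLRole.sem I R) (DLRole.sem I S)
  | .runion R S => fun x y => DLRole.sem I R x y ∨ DLRole.sem I S x y
  | .star R => Relation.ReflTransGen (DLRole.sem I R)
  | .test C => fun x y => x = y ∧ x ∈ DLConcept.sem I C
  | .inv r => fun x y => I.rInt r y x
  | .univ => fun _ _ => True
end

/-- `Z` is an `L_Φ`-bisimulation between `I` and `I'`. -/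
def Bisim {CN RN IN D D' : Type} (Φ : DLFeat) (I : Interp CN RN IN D)
    (I' : Interp CN RN IN D') (Z : D → D' → Prop) : Prop :=
  (∀ a : IN, Z (I.iInt a) (I'.iInt a)) ∧
  (∀ (A : CN) x x', Z x x' → (x ∈ I.cInt A ↔ x' ∈ I'.cInt A)) ∧
  (∀ (r : RN) x x' y, Z x x' → I.rInt r x y → ∃ y', Z y y' ∧ I'.rInt r x' y') ∧
  (∀ (r : RN) x x' y', Z x x' → I'.rInt r x' y' → ∃ y, Z y y' ∧ I.rInt r x y) ∧
  (Φ.hasI = true →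
    (∀ (r : RN) x x' y, Z x x' → I.rInt r y x → ∃ y', Z y y' ∧ I'.rInt r y' x') ∧
    (∀ (r : RN) x x' y', Z x x' → I'.rInt r y' x' → ∃ y, Z y y' ∧ I.rInt r y x)) ∧
  (Φ.hasO = true → ∀ (a : IN) x x', Z x x' → (x = I.iInt a ↔ x' = I'.iInt a)) ∧
  (Φ.hasQ = true → ∀ (r : RN) x x', Z x x' →
    ∃ h : {y // I.rInt r x y} ≃ {y' // I'.rInt r x' y'}, ∀ y, Z y.1 (h y).1) ∧
  (Φ.hasQ = true → Φ.hasI = true → ∀ (r : RN) x x', Z x x' →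
    ∃ h : {y // I.rInt r y x} ≃ {y' // I'.rInt r y' x'}, ∀ y, Z y.1 (h y).1) ∧
  (Φ.hasU = true → (∀ x, ∃ x', Z x x') ∧ (∀ x', ∃ x, Z x x')) ∧
  (Φ.hasSelf = true → ∀ (r : RN) x x', Z x x' → (I.rInt r x x ↔ I'.rInt r x' x'))

/-- One step along a basic role (role name, or inverse of a role name if `I ∈ Φ`). -/
def basicStep {CN RN IN D : Type} (Φ : DLFeat) (I : Interp CN RN IN D) (x y : D) : Prop :=
  ∃ r : RN, I.rInt r x y ∨ (Φ.hasI = true ∧ I.rInt r y x)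

/-- `I` is unreachable-objects-free: every element is reachable from some named
individual via a finite path of basic-role edges. -/
def UOF {CN RN IN D : Type} (Φ : DLFeat) (I : Interp CN RN IN D) : Prop :=
  ∀ x : D, ∃ a : IN, Relation.ReflTransGen (basicStep Φ I) (I.iInt a) x

/-- `I` validates the GCI `C ⊑ C'`. -/
def satGCI {CN RN IN D : Type} (I : Interp CN RN IN D) (C C' : DLConcept CN RN IN) : Prop :=
  DLConcept.sem I C ⊆ DLConcept.sem I C'

/-- `I` is a model of the TBox `T`. -/
def modelsTBox {CN RN IN D : Type} (I : Interp CN RN IN D)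
    (T : Set (DLConcept CN RN IN × DLConcept CN RN IN)) : Prop :=
  ∀ p ∈ T, satGCI I p.1 p.2

/-- Individual assertions. -/
inductive Assertion (CN RN IN : Type) : Type where
  | conc (C : DLConcept CN RN IN) (a : IN)
  | rolePos (R : DLRole CN RN IN) (a b : IN)
  | roleNeg (R : DLRole CN RN IN) (a b : IN)
  | eq (a b : IN)
  | neq (a b : IN)

/-- The assertion belongs to `L_Φ`. -/
def Assertion.inL {CN RN IN : Type} (Φ : DLFeat) : Assertion CN RN IN → Prop
  | .conc C _ => C.inL Φ
  | .rolePos R _ _ => R.inL Φ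
  | .roleNeg R _ _ => R.inL Φ
  | .eq _ _ => True
  | .neq _ _ => True

/-- `I` satisfies the individual assertion. -/
def Assertion.sat {CN RN IN D : Type} (I : Interp CN RN IN D) : Assertion CN RN IN → Prop
  | .conc C a => I.iInt a ∈ DLConcept.sem I C
  | .rolePos R a b => DLRole.sem I R (I.iInt a) (I.iInt b)
  | .roleNeg R a b => ¬ DLRole.sem I R (I.iInt a) (I.iInt b)
  | .eq a b => I.iInt a = I.iInt b
  | .neq a b => I.iInt a ≠ I.iInt b

/-- `I` is a model of the ABox `A`. -/
def modelsABox {CN RN IN D : Type} (I : Interp CN RN IN D) (A : Set (Assertion CN RN IN)) : Prop :=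
  ∀ φ ∈ A, φ.sat I

/-- A role axiom `R₁ ∘ … ∘ R_k ⊑ r` (`ε ⊑ r` when the list is empty), the `R_i` basic roles. -/
structure RoleAx (RN : Type) where
  lhs : List (RN × Bool)
  rhs : RN

/-- The role axiom is in `L_Φ` (inverse basic roles only if `I ∈ Φ`). -/
def RoleAx.inL {RN : Type} (Φ : DLFeat) (ax : RoleAx RN) : Prop :=
  ∀ p ∈ ax.lhs, p.2 = true → Φ.hasI = true

/-- Interpretation of a composition chain of basic roles (`ε` for the empty chain). -/
def chainInt {CN RN IN D : Type} (I : Interp CN RN IN D) : List (RN × Bool) → D → D → Prop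
  | [] => Eq
  | R :: l => fun x z => ∃ y, brInt I R x y ∧ chainInt I l y z

/-- `I` validates the role axiom. -/
def satRoleAx {CN RN IN D : Type} (I : Interp CN RN IN D) (ax : RoleAx RN) : Prop :=
  ∀ x y, chainInt I ax.lhs x y → I.rInt ax.rhs x y

/-- `I` is a model of the RBox `R`. -/
def modelsRBox {CN RN IN D : Type} (I : Interp CN RN IN D) (R : Set (RoleAx RN)) : Prop :=
  ∀ ax ∈ R, satRoleAx I ax

/-- `I'` is an r-extension of `I`. -/
def RExt {CN RN IN D : Type} (I I' : Interp CN RN IN D) : Prop :=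
  I'.cInt = I.cInt ∧ I'.iInt = I.iInt ∧ ∀ (r : RN) x y, I.rInt r x y → I'.rInt r x y

/-- `I'` is the least r-extension of `I` validating the RBox `R`. -/
def LeastRExt {CN RN IN D : Type} (I : Interp CN RN IN D) (R : Set (RoleAx RN))
    (I' : Interp CN RN IN D) : Prop :=
  RExt I I' ∧ modelsRBox I' R ∧
    ∀ I'' : Interp CN RN IN D, RExt I I'' → modelsRBox I'' R →
      ∀ (r : RN) x y, I'.rInt r x y → I''.rInt r x y

/-- `I` is finitely branching w.r.t. `L_Φ`. -/
def FinBranch {CN RN IN D : Type} (Φ : DLFeat) (I : Interp CN RN IN D) : Prop :=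
  ∀ (r : RN) (x : D), {y | I.rInt r x y}.Finite ∧ (Φ.hasI = true → {y | I.rInt r y x}.Finite)

/-- `x` and `x'` are `L_Φ`-equivalent: they satisfy the same concepts of `L_Φ`. -/
def LEquiv {CN RN IN D D' : Type} (Φ : DLFeat) (I : Interp CN RN IN D)
    (I' : Interp CN RN IN D') (x : D) (x' : D') : Prop :=
  ∀ C : DLConcept CN RN IN, C.inL Φ → (x ∈ DLConcept.sem I C ↔ x' ∈ DLConcept.sem I' C)

/-- The largest `L_Φ`-auto-bisimulation of `I` (union of all auto-bisimulations). -/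
def gbisim {CN RN IN D : Type} (Φ : DLFeat) (I : Interp CN RN IN D) (x y : D) : Prop :=
  ∃ Z, Bisim Φ I I Z ∧ Z x y

/-- The quotient interpretation of `I` w.r.t. the largest `L_Φ`-auto-bisimulation. -/
def quotInterp {CN RN IN D : Type} (Φ : DLFeat) (I : Interp CN RN IN D) :
    Interp CN RN IN (Quot (gbisim Φ I)) where
  cInt A := {q | ∃ x, Quot.mk _ x = q ∧ x ∈ I.cInt A}
  rInt r q q' := ∃ x y, Quot.mk _ x = q ∧ Quot.mk _ y = q' ∧ I.rInt r x y
  iInt a := Quot.mk _ (I.iInt a)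

/-- A QS-interpretation: an interpretation together with multiplicity functions for
basic roles and self-loop sets for role names. -/
structure QSInterp (CN RN IN D : Type) where
  toInterp : Interp CN RN IN D
  QU : (RN × Bool) → D → D → ℕ
  SE : RN → Set D

/-- The defining positivity condition of QS-interpretations:
`QU R x y > 0` iff `R` connects `x` to `y`. -/
def QSInterp.Proper {CN RN IN D : Type} (J : QSInterp CN RN IN D) : Prop :=
  ∀ (R : RN × Bool) x y, 0 < J.QU R x y ↔ brInt J.toInterp R x y

/-- `Σ {f y : y ∈ S}` as an extended natural number. -/
noncomputable def qsum {D : Type} (f : D → ℕ) (S : Set D) : ℕ∞ :=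
  ⨆ (s : Finset D) (_ : ↑s ⊆ S), (∑ y ∈ s, f y : ℕ∞)

mutual
/-- Semantics of concepts in a QS-interpretation. -/
noncomputable def DLConcept.qsem {CN RN IN D : Type} (J : QSInterp CN RN IN D) :
    DLConcept CN RN IN → Set D
  | .atom A => J.toInterp.cInt A
  | .top => Set.univ
  | .bot => ∅
  | .neg C => (DLConcept.qsem J C)ᶜ
  | .conj C C' => DLConcept.qsem J C ∩ DLConcept.qsem J C'
  | .disj C C' => DLConcept.qsem J C ∪ DLConcept.qsem J C'
  | .all R C => {x | ∀ y, DLRole.qsem J R x y → y ∈ DLConcept.qsem J C}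
  | .ex R C => {x | ∃ y, DLRole.qsem J R x y ∧ y ∈ DLConcept.qsem J C}
  | .nom a => {J.toInterp.iInt a}
  | .atLeast n r b C => {x | (n : ℕ∞) ≤ qsum (J.QU (r, b) x) (DLConcept.qsem J C)}
  | .atMost n r b C => {x | qsum (J.QU (r, b) x) (DLConcept.qsem J C) ≤ (n : ℕ∞)}
  | .exSelf r => J.SE r
/-- Semantics of roles in a QS-interpretation. -/
noncomputable def DLRole.qsem {CN RN IN D : Type} (J : QSInterp CN RN IN D) :
    DLRole CN RN IN → D → D → Prop
  | .name r => J.toInterp.rInt r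
  | .eps => Eq
  | .comp R S => Relation.Comp (DLRole.qsem J R) (DLRole.qsem J S)
  | .runion R S => fun x y => DLRole.qsem J R x y ∨ DLRole.qsem J S x y
  | .star R => Relation.ReflTransGen (DLRole.qsem J R)
  | .test C => fun x y => x = y ∧ x ∈ DLConcept.qsem J C
  | .inv r => fun x y => J.toInterp.rInt r y x
  | .univ => fun _ _ => True
end

/-- The quotient QS-interpretation of a traditional interpretation `I` w.r.t. the
largest `L_Φ`-auto-bisimulation. -/
noncomputable def qsQuot {CN RN IN D : Type} (Φ : DLFeat) (I : Interp CN RN IN D) :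
    QSInterp CN RN IN (Quot (gbisim Φ I)) where
  toInterp := quotInterp Φ I
  QU R q q' := sSup {n | ∃ x, Quot.mk _ x = q ∧
    n = Set.ncard {y | Quot.mk (gbisim Φ I) y = q' ∧ brInt I R x y}}
  SE r := {q | ∃ x, Quot.mk _ x = q ∧ I.rInt r x x}

/-!
Simultaneous structural induction on concepts and roles: concepts of `L_Φ` are preserved along `Z`,
and every role of `L_Φ` satisfies the zig condition for `Z`. The zag condition is zig for the
converse bisimulation `flip Z`. Number restrictions are preserved because the bijections between
successor sets supplied by `Q` restrict, by the induction hypothesis, to bijections between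
successors in `C`.
-/

theorem Cardinal.mk_subtype_and_congr {D D' : Type} {P Q : D → Prop} {P' Q' : D' → Prop}
    (e : {y // P y} ≃ {y' // P' y'}) (hQ : ∀ y, Q y.1 ↔ Q' (e y).1) :
    Cardinal.mk {y // P y ∧ Q y} = Cardinal.mk {y' // P' y' ∧ Q' y'} :=
  Cardinal.mk_congr <| (Equiv.subtypeSubtypeEquivSubtypeInter P Q).symm.trans <|
    (e.subtypeEquiv hQ).trans (Equiv.subtypeSubtypeEquivSubtypeInter P' Q')

theorem exists_subtype_equiv_flip {D D' : Type} {P : D → Prop} {P' : D' → Prop}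
    {Z : D → D' → Prop} (h : ∃ e : {y // P y} ≃ {y' // P' y'}, ∀ y, Z y.1 (e y).1) :
    ∃ e : {y' // P' y'} ≃ {y // P y}, ∀ y', Z (e y').1 y'.1 := by
  obtain ⟨e, he⟩ := h
  exact ⟨e.symm, fun y' => by simpa only [Equiv.apply_symm_apply] using he (e.symm y')⟩

namespace Bisim

variable {CN RN IN D D' : Type} {Φ : DLFeat} {I : Interp CN RN IN D}
  {I' : Interp CN RN IN D'} {Z : D → D' → Prop}

theorem symm (h : Bisim Φ I I' Z) : Bisim Φ I' I (flip Z) := by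
  obtain ⟨hInd, hAtom, hZig, hZag, hInv, hNom, hQ, hQInv, hU, hSelf⟩ := h
  exact ⟨hInd,
    fun A x' x hZ => (hAtom A x x' hZ).symm,
    fun r x' x y' hZ => hZag r x x' y' hZ,
    fun r x' x y hZ => hZig r x x' y hZ,
    fun hI => ⟨fun r x' x y' hZ => (hInv hI).2 r x x' y' hZ,
      fun r x' x y hZ => (hInv hI).1 r x x' y hZ⟩,
    fun hO a x' x hZ => (hNom hO a x x' hZ).symm,
    fun hq r x' x hZ => exists_subtype_equiv_flip (hQ hq r x x' hZ),
    fun hq hI r x' x hZ => exists_subtype_equiv_flip (hQInv hq hI r x x' hZ),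
    fun hu => (hU hu).symm,
    fun hs r x' x hZ => (hSelf hs r x x' hZ).symm⟩

theorem exists_brInt_equiv (h : Bisim Φ I I' Z) (hQ : Φ.hasQ = true) {r : RN} {b : Bool}
    (hb : b = true → Φ.hasI = true) {x : D} {x' : D'} (hZ : Z x x') :
    ∃ e : {y // brInt I (r, b) x y} ≃ {y' // brInt I' (r, b) x' y'}, ∀ y, Z y.1 (e y).1 := by
  obtain ⟨-, -, -, -, -, -, hSucc, hPred, -, -⟩ := h
  cases b
  · exact hSucc hQ r x x' hZ
  · exact hPred hQ (hb rfl) r x x' hZ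

theorem mk_brInt_eq (h : Bisim Φ I I' Z) (hQ : Φ.hasQ = true) {r : RN} {b : Bool}
    (hb : b = true → Φ.hasI = true) {x : D} {x' : D'} (hZ : Z x x') {S : Set D} {S' : Set D'}
    (hS : ∀ {y y'}, Z y y' → (y ∈ S ↔ y' ∈ S')) :
    Cardinal.mk {y // brInt I (r, b) x y ∧ y ∈ S} =
      Cardinal.mk {y' // brInt I' (r, b) x' y' ∧ y' ∈ S'} := by
  obtain ⟨e, he⟩ := h.exists_brInt_equiv hQ hb hZ
  exact Cardinal.mk_subtype_and_congr e fun y => hS (he y)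

end Bisim

mutual

theorem Bisim.mem_sem_iff {CN RN IN D D' : Type} {Φ : DLFeat} {I : Interp CN RN IN D}
    {I' : Interp CN RN IN D'} {Z : D → D' → Prop} (h : Bisim Φ I I' Z)
    {C : DLConcept CN RN IN} (hC : C.inL Φ) {x : D} {x' : D'} (hZ : Z x x') :
    x ∈ C.sem I ↔ x' ∈ C.sem I' := by
  obtain ⟨-, hAtom, -, -, -, hNom, -, -, -, hSelf⟩ := id h
  cases C with
  | atom A => exact hAtom A x x' hZ
  | top => simp only [DLConcept.sem, Set.mem_univ]
  | bot => simp only [DLConcept.sem, Set.mem_empty_iff_false]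
  | neg C =>
    simp only [DLConcept.sem, Set.mem_compl_iff]
    exact (h.mem_sem_iff (C := C) hC hZ).not
  | conj C C' =>
    simpa only [DLConcept.sem, Set.mem_inter_iff] using
      and_congr (h.mem_sem_iff hC.1 hZ) (h.mem_sem_iff hC.2 hZ)
  | disj C C' =>
    simpa only [DLConcept.sem, Set.mem_union] using
      or_congr (h.mem_sem_iff hC.1 hZ) (h.mem_sem_iff hC.2 hZ)
  | all R C =>
    simp only [DLConcept.sem, Set.mem_ofPred_eq]
    constructor
    · intro hx y' hy'
      obtain ⟨y, hZy, hy⟩ := h.symm.exists_role_sem hC.1 hZ hy'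
      exact (h.mem_sem_iff hC.2 hZy).1 (hx y hy)
    · intro hx' y hy
      obtain ⟨y', hZy, hy'⟩ := h.exists_role_sem hC.1 hZ hy
      exact (h.mem_sem_iff hC.2 hZy).2 (hx' y' hy')
  | ex R C =>
    simp only [DLConcept.sem, Set.mem_ofPred_eq]
    constructor
    · rintro ⟨y, hy, hyC⟩
      obtain ⟨y', hZy, hy'⟩ := h.exists_role_sem hC.1 hZ hy
      exact ⟨y', hy', (h.mem_sem_iff hC.2 hZy).1 hyC⟩
    · rintro ⟨y', hy', hyC'⟩
      obtain ⟨y, hZy, hy⟩ := h.symm.exists_role_sem hC.1 hZ hy'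
      exact ⟨y, hy, (h.mem_sem_iff hC.2 hZy).2 hyC'⟩
  | nom a => simpa only [DLConcept.sem, Set.mem_singleton_iff] using hNom hC a x x' hZ
  | atLeast n r b C =>
    simp only [DLConcept.sem, Set.mem_ofPred_eq,
      h.mk_brInt_eq hC.1 hC.2.1 hZ fun hZy => h.mem_sem_iff hC.2.2 hZy]
  | atMost n r b C =>
    simp only [DLConcept.sem, Set.mem_ofPred_eq,
      h.mk_brInt_eq hC.1 hC.2.1 hZ fun hZy => h.mem_sem_iff hC.2.2 hZy]
  | exSelf r => exact hSelf hC r x x' hZ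

theorem Bisim.exists_role_sem {CN RN IN D D' : Type} {Φ : DLFeat} {I : Interp CN RN IN D}
    {I' : Interp CN RN IN D'} {Z : D → D' → Prop} (h : Bisim Φ I I' Z)
    {R : DLRole CN RN IN} (hR : R.inL Φ) {x y : D} {x' : D'} (hZ : Z x x')
    (hxy : R.sem I x y) : ∃ y', Z y y' ∧ R.sem I' x' y' := by
  obtain ⟨-, -, hZig, -, hInv, -, -, -, hU, -⟩ := id h
  cases R with
  | name r => exact hZig r x x' y hZ hxy
  | eps => exact ⟨x', hxy ▸ hZ, rfl⟩
  | comp R S =>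
    obtain ⟨z, hxz, hzy⟩ := hxy
    obtain ⟨z', hZz, hxz'⟩ := h.exists_role_sem hR.1 hZ hxz
    obtain ⟨y', hZy, hzy'⟩ := h.exists_role_sem hR.2 hZz hzy
    exact ⟨y', hZy, z', hxz', hzy'⟩
  | runion R S =>
    rcases hxy with hxy | hxy
    · obtain ⟨y', hZy, hy'⟩ := h.exists_role_sem hR.1 hZ hxy
      exact ⟨y', hZy, Or.inl hy'⟩
    · obtain ⟨y', hZy, hy'⟩ := h.exists_role_sem hR.2 hZ hxy
      exact ⟨y', hZy, Or.inr hy'⟩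
  | star R =>
    induction hxy with
    | refl => exact ⟨x', hZ, .refl⟩
    | tail _ hzy ih =>
      obtain ⟨z', hZz, hxz'⟩ := ih
      obtain ⟨y', hZy, hzy'⟩ := h.exists_role_sem (R := R) hR hZz hzy
      exact ⟨y', hZy, hxz'.tail hzy'⟩
  | test C =>
    obtain ⟨rfl, hxC⟩ := hxy
    exact ⟨x', hZ, rfl, (h.mem_sem_iff hR hZ).1 hxC⟩
  | inv r => exact (hInv hR).1 r x x' y hZ hxy
  | univ =>
    obtain ⟨y', hZy⟩ := (hU hR).1 y
    exact ⟨y', hZy, trivial⟩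

end

/-- Concepts of `L_Φ` are invariant for `L_Φ`-bisimulation. -/
theorem concept_invariance {CN RN IN D D' : Type} (Φ : DLFeat) (I : Interp CN RN IN D)
    (I' : Interp CN RN IN D') (Z : D → D' → Prop) (h : Bisim Φ I I' Z)
    (x : D) (x' : D') (hZ : Z x x') (C : DLConcept CN RN IN) (hC : C.inL Φ) :
    x ∈ DLConcept.sem I C ↔ x' ∈ DLConcept.sem I' C :=
  h.mem_sem_iff hC hZ
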